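/- arXiv:1508.04485 — 2 statements merged into one kernel-verified Lean document; each statement's English description precedes it below -/
import Mathlib

section
/- If a right node k is a singleton (exactly one defective item ℓ is adjacent to it), then with the signature matrix whose i-th column is (b_i, b̄_i), the measurement z_k has Hamming weight exactly L, and the first L bits of z_k equal b_ℓ, so ℓ is recovered exactly. -/
/-- Hamming weight: the number of ones of a binary vector. -/
def hammingWeight {L : ℕ} (b : Fin L → Bool) : ℕ :=
  (Finset.univ.filter fun i => b i = true).card

/-- The `L`-bit binary representation of the index `i` (i.e. of the integer `i - 1` in
one-based indexing) among `n = 2^L` items. -/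
def binRep {L n : ℕ} (i : Fin n) : Fin L → Bool := fun k => (i : ℕ).testBit k

/-!
A singleton measurement is the signature `(b_ℓ, b̄_ℓ)` itself. Every coordinate is set in
exactly one of `b` and `b̄`, so the weight is `L`; and `L` bits determine an index below
`2 ^ L`, since all higher bits vanish.
-/

theorem hammingWeight_add_hammingWeight_not {L : ℕ} (b : Fin L → Bool) :
    hammingWeight b + hammingWeight (fun j => !b j) = L := by
  simpa [hammingWeight] using
    Finset.card_filter_add_card_filter_not (s := Finset.univ) fun j => b j = true

theorem binRep_injective {L n : ℕ} (hn : n ≤ 2 ^ L) :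
    Function.Injective (binRep (L := L) (n := n)) := by
  intro i i' h
  refine Fin.ext (Nat.eq_of_testBit_eq fun j => ?_)
  by_cases hj : j < L
  · exact congrFun h ⟨j, hj⟩
  · have hpow : 2 ^ L ≤ 2 ^ j := Nat.pow_le_pow_right two_pos (not_lt.mp hj)
    rw [Nat.testBit_lt_two_pow (by omega), Nat.testBit_lt_two_pow (by omega)]

/-- If right node `k` is a singleton, i.e. the set `D` of its defective neighbors is
exactly `{ℓ}`, then with signatures `u_i = (b_i, b̄_i)` the measurement
`z_k = ⋁_{i ∈ D} u_i` has Hamming weight exactly `L`, its first `L` bits equal `b_ℓ`,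
and `ℓ` is recovered exactly (the first half determines `ℓ` uniquely). -/
theorem singleton_resolved {L : ℕ} (n : ℕ) (hn : n = 2 ^ L)
    (D : Finset (Fin n)) (ℓ : Fin n) (hD : D = {ℓ})
    (z₁ z₂ : Fin L → Bool)
    (hz₁ : z₁ = fun j => D.sup fun i => binRep i j)
    (hz₂ : z₂ = fun j => D.sup fun i => !(binRep (L := L) i j)) :
    hammingWeight z₁ + hammingWeight z₂ = L ∧
    z₁ = binRep ℓ ∧
    ∀ ℓ' : Fin n, binRep (L := L) ℓ' = z₁ → ℓ' = ℓ := by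
  subst hD hz₁ hz₂
  simp only [Finset.sup_singleton]
  exact ⟨hammingWeight_add_hammingWeight_not _, trivial,
    fun ℓ' h => binRep_injective hn.le h⟩
end

section
/- If a right node is connected to exactly two defective items i ≠ j, then the Hamming weight of its measurement z = u_i ∨ u_j strictly exceeds L, where u_i = (b_i, b̄_i); hence a right node adjacent to exactly two distinct defective items is never mistaken for a singleton by the weight-L test. -/
/-- Where `a` and `b` agree exactly one of the two disjunctions is true, where they differ both
are. -/
theorem hammingWeight_or_add_hammingWeight_not_or {L : ℕ} (a b : Fin L → Bool) :
    hammingWeight (fun k => a k || b k) + hammingWeight (fun k => !a k || !b k) =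
      L + hammingDist a b := by
  classical
  unfold hammingWeight hammingDist
  rw [← Finset.card_union_add_card_inter, ← Finset.filter_or, ← Finset.filter_and]
  congr 1
  · rw [Finset.filter_true_of_mem fun k _ => by dsimp only; cases a k <;> cases b k <;> decide,
      Finset.card_univ, Fintype.card_fin]
  · congr 1
    ext k
    simp only [Finset.mem_filter, Finset.mem_univ, true_and]
    cases a k <;> cases b k <;> decide

/-- If a right node is connected to exactly two distinct defective items `i ≠ j`, then
the Hamming weight of its measurement `z = u_i ∨ u_j` (with `u_i = (b_i, b̄_i)`)
strictly exceeds `L`: such a node is never mistaken for a singleton by the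
weight-`L` test. -/
theorem doubleton_weight_gt {L : ℕ} (n : ℕ) (hn : n = 2 ^ L)
    (i j : Fin n) (hij : i ≠ j) :
    hammingWeight (fun k => binRep (L := L) i k || binRep j k) +
      hammingWeight (fun k => !(binRep (L := L) i k) || !(binRep j k)) > L := by
  rw [hammingWeight_or_add_hammingWeight_not_or]
  have := hammingDist_pos.mpr ((binRep_injective hn.le).ne hij)
  omega
end
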